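/- arXiv:2601.15238 — 4 statements merged into one kernel-verified Lean document; each statement's English description precedes it below -/
import Mathlib

section
/- Let $E \subset F \subset B_{1/2} \subset \mathbb{R}^d$ be measurable sets and $\iota > 0$ a constant. Assume $|E| < (1-\iota)|B_{1/2}|$ and that any open ball $B \subset B_{1/2}$ with $|E \cap B| > (1-\iota)|B|$ satisfies $B \subset F$. Then $|E| \le (1 - c\iota)|F|$ for some constant $c$ depending only on the dimension $d$ (one may take $c = 5^{-d}$). -/
/-!
At almost every point `x` of `E` (a Lebesgue density point) some small ball is more than
`(1 - ι)`-full of `E`. Slide and inflate it continuously until it becomes `B_{1/2}`, which is not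
`(1 - ι)`-full. At the first moment the moving ball stops being `(1 - ι)`-full, it is still the
union of earlier, full balls, all contained in `F` by hypothesis; so it is a ball containing `x`,
lying in `F`, at least a fraction `ι` of which lies outside `E`. Vitali's covering lemma extracts
disjoint such balls whose fivefold enlargements cover almost all of `E`, whence
`ι |E| ≤ 5^d |F \ E|`, which rearranges to `|E| ≤ (1 - ι / (5^d + 1)) |F|`.
-/

open MeasureTheory Metric Set Filter Topology AffineMap
open scoped ENNReal

theorem Monotone.apply_csInf_le_of_continuousOn {α β : Type*} [ConditionallyCompleteLinearOrder α]
    [TopologicalSpace α] [OrderTopology α] [Preorder β] [TopologicalSpace β] [ClosedIciTopology β]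
    {f g : α → β} (hf : Monotone f) {s S : Set α} (hs : IsClosed s) (hg : ContinuousOn g s)
    (hSs : S ⊆ s) (hne : S.Nonempty) (hbdd : BddBelow S) (hfg : ∀ t ∈ S, f t ≤ g t) :
    f (sInf S) ≤ g (sInf S) := by
  have hclosed : IsClosed (s ∩ g ⁻¹' Ici (f (sInf S))) :=
    hg.preimage_isClosed_of_isClosed hs isClosed_Ici
  have hS : S ⊆ s ∩ g ⁻¹' Ici (f (sInf S)) := fun t ht =>
    ⟨hSs ht, (hf (csInf_le hbdd ht)).trans (hfg t ht)⟩
  exact (hclosed.closure_subset_iff.2 hS (csInf_mem_closure hne hbdd)).2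

theorem subset_of_forall_Ioo_subset {α : Type*} {B : ℝ → Set α} {F : Set α}
    (hB : ∀ y, IsOpen {t | y ∈ B t}) {a b : ℝ} (hab : a < b) (h : ∀ t ∈ Ioo a b, B t ⊆ F) :
    B b ⊆ F := by
  intro y hy
  have hnear : ∀ᶠ t in 𝓝[<] b, y ∈ B t := mem_nhdsWithin_of_mem_nhds ((hB y).mem_nhds hy)
  obtain ⟨t, hyt, ht⟩ := (hnear.and (Ioo_mem_nhdsLT hab)).exists
  exact h t ht hyt

theorem ofReal_mul_measure_le_measure_sdiff {α : Type*} [MeasurableSpace α] {μ : Measure α}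
    {s t : Set α} (ht : NullMeasurableSet t μ) (hs : μ s ≠ ⊤) {ι : ℝ} (hι0 : 0 ≤ ι) (hι1 : ι ≤ 1)
    (h : μ (s ∩ t) ≤ ENNReal.ofReal (1 - ι) * μ s) :
    ENNReal.ofReal ι * μ s ≤ μ (s \ t) := by
  have hfin : ENNReal.ofReal (1 - ι) * μ s ≠ ⊤ := ENNReal.mul_ne_top ENNReal.ofReal_ne_top hs
  refine (ENNReal.add_le_add_iff_right hfin).1 ?_
  calc ENNReal.ofReal ι * μ s + ENNReal.ofReal (1 - ι) * μ s = μ s := by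
        rw [← add_mul, ← ENNReal.ofReal_add hι0 (by linarith), add_sub_cancel, ENNReal.ofReal_one,
          one_mul]
    _ = μ (s ∩ t) + μ (s \ t) := (measure_inter_add_sdiff₀ s ht).symm
    _ ≤ μ (s \ t) + ENNReal.ofReal (1 - ι) * μ s := by rw [add_comm]; gcongr

theorem measure_le_of_ofReal_mul_le_measure_sdiff {α : Type*} [MeasurableSpace α] {μ : Measure α}
    {E F : Set α} (hEF : E ⊆ F) (hE : MeasurableSet E) (hF : μ F ≠ ⊤) {ι K : ℝ}
    (hι0 : 0 ≤ ι) (hι1 : ι ≤ 1) (hK : 0 ≤ K)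
    (h : ENNReal.ofReal ι * μ E ≤ ENNReal.ofReal K * μ (F \ E)) :
    μ E ≤ ENNReal.ofReal (1 - ι / (K + 1)) * μ F := by
  have hE' : μ E ≠ ⊤ := ne_top_of_le_ne_top hF (measure_mono hEF)
  have hreal : ι * μ.real E ≤ K * (μ.real F - μ.real E) := by
    have := ENNReal.toReal_mono (ENNReal.mul_ne_top ENNReal.ofReal_ne_top
      (ne_top_of_le_ne_top hF (measure_mono sdiff_subset))) h
    rwa [ENNReal.toReal_mul, ENNReal.toReal_mul, ENNReal.toReal_ofReal hι0,
      ENNReal.toReal_ofReal hK, ← measureReal_def, ← measureReal_def,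
      measureReal_sdiff hEF hE hF] at this
  have hcoef : 0 ≤ 1 - ι / (K + 1) := sub_nonneg.2 ((div_le_one (by linarith)).2 (by linarith))
  have hfinal : μ.real E ≤ (1 - ι / (K + 1)) * μ.real F := by
    rw [one_sub_div (by linarith), div_mul_eq_mul_div, le_div_iff₀ (by linarith)]
    nlinarith [measureReal_mono hEF hF, measureReal_nonneg (μ := μ) (s := E)]
  rw [← ofReal_measureReal hE', ← ofReal_measureReal hF, ← ENNReal.ofReal_mul hcoef]
  exact ENNReal.ofReal_le_ofReal hfinal

section InterpolatedBall

variable {V : Type*} [NormedAddCommGroup V] [NormedSpace ℝ V]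

def interpolatedBall (x z : V) (ε R t : ℝ) : Set V := ball (lineMap x z t) (lineMap ε R t)

variable {x z : V} {ε R : ℝ}

@[simp] theorem interpolatedBall_zero : interpolatedBall x z ε R 0 = ball x ε := by
  simp [interpolatedBall]

@[simp] theorem interpolatedBall_one : interpolatedBall x z ε R 1 = ball z R := by
  simp [interpolatedBall]

theorem interpolatedBall_mono (h : dist x z ≤ R - ε) : Monotone (interpolatedBall x z ε R) := by
  intro s t hst
  refine ball_subset_ball' ?_
  rw [dist_lineMap_lineMap, Real.dist_eq, abs_of_nonpos (by linarith), lineMap_apply_ring',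
    lineMap_apply_ring']
  nlinarith

theorem isOpen_setOf_mem_interpolatedBall (y : V) :
    IsOpen {t | y ∈ interpolatedBall x z ε R t} :=
  isOpen_lt (continuous_const.dist lineMap_continuous) lineMap_continuous

end InterpolatedBall

section AddHaar

variable {V : Type*} [NormedAddCommGroup V] [NormedSpace ℝ V] [MeasurableSpace V] [BorelSpace V]
  [FiniteDimensional ℝ V] (μ : Measure V) [μ.IsAddHaarMeasure]

theorem continuousOn_measure_interpolatedBall {x z : V} {ε R : ℝ} (hε : 0 < ε) (hεR : ε ≤ R) :
    ContinuousOn (fun t => μ (interpolatedBall x z ε R t)) (Ici 0) := by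
  have hformula : EqOn (fun t => ENNReal.ofReal (lineMap ε R t ^ Module.finrank ℝ V) * μ (ball 0 1))
      (fun t => μ (interpolatedBall x z ε R t)) (Ici 0) := fun t ht => by
    have : 0 < lineMap ε R t := by rw [lineMap_apply_ring']; nlinarith [mem_Ici.1 ht]
    exact (Measure.addHaar_ball_of_pos μ _ this).symm
  refine ContinuousOn.congr (Continuous.continuousOn ?_) hformula.symm
  exact (ENNReal.continuous_mul_const measure_ball_lt_top.ne).comp
    (ENNReal.continuous_ofReal.comp (lineMap_continuous.pow _))

theorem exists_ball_subset_measure_inter_le_of_lt {E F : Set V} {θ : ℝ≥0∞} {x z : V} {ε R : ℝ}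
    (hε : 0 < ε) (hxz : dist x z ≤ R - ε)
    (hx : θ * μ (ball x ε) < μ (E ∩ ball x ε)) (hz : μ (E ∩ ball z R) ≤ θ * μ (ball z R))
    (hF : ∀ y r, 0 < r → ball y r ⊆ ball z R → θ * μ (ball y r) < μ (E ∩ ball y r) →
      ball y r ⊆ F) :
    ∃ y r, r ≤ R ∧ x ∈ ball y r ∧ ball y r ⊆ F ∧ μ (E ∩ ball y r) ≤ θ * μ (ball y r) := by
  have hεR : ε ≤ R := by linarith [dist_nonneg (x := x) (y := z)]
  have hθ : θ ≠ ⊤ := by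
    rintro rfl
    rw [ENNReal.top_mul (measure_ball_pos μ x hε).ne'] at hx
    exact not_top_lt hx
  set B := interpolatedBall x z ε R
  have hB := interpolatedBall_mono hxz
  have hradius : ∀ t ∈ Icc (0 : ℝ) 1, 0 < lineMap ε R t ∧ lineMap ε R t ≤ R := fun t ht => by
    rw [lineMap_apply_ring']; constructor <;> nlinarith [ht.1, ht.2]
  set S := {t ∈ Icc (0 : ℝ) 1 | μ (E ∩ B t) ≤ θ * μ (B t)}
  have h1S : (1 : ℝ) ∈ S := ⟨right_mem_Icc.2 zero_le_one, by simpa [B] using hz⟩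
  have hbdd : BddBelow S := ⟨0, fun t ht => ht.1.1⟩
  have ht₀ : sInf S ∈ Icc (0 : ℝ) 1 := ⟨le_csInf ⟨1, h1S⟩ fun t ht => ht.1.1, csInf_le hbdd h1S⟩
  have hmono : Monotone fun t => μ (E ∩ B t) := fun s t hst =>
    measure_mono (inter_subset_inter_right E (hB hst))
  have hcont : ContinuousOn (fun t => θ * μ (B t)) (Icc 0 1) :=
    (ENNReal.continuous_const_mul hθ).comp_continuousOn
      ((continuousOn_measure_interpolatedBall μ hε hεR).mono Icc_subset_Ici_self)
  have hsparse : μ (E ∩ B (sInf S)) ≤ θ * μ (B (sInf S)) :=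
    hmono.apply_csInf_le_of_continuousOn isClosed_Icc hcont (sep_subset _ _) ⟨1, h1S⟩ hbdd
      fun t ht => ht.2
  have hpos : 0 < sInf S := by
    refine ht₀.1.lt_of_ne fun h => (hx.trans_le ?_).false
    simpa [← h, B] using hsparse
  have hdense : ∀ t ∈ Ioo 0 (sInf S), B t ⊆ F := fun t ht => by
    have hmem : t ∈ Icc (0 : ℝ) 1 := ⟨ht.1.le, ht.2.le.trans ht₀.2⟩
    have hlt : θ * μ (B t) < μ (E ∩ B t) := not_le.1 fun h => (csInf_le hbdd ⟨hmem, h⟩).not_gt ht.2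
    exact hF _ _ (hradius t hmem).1 ((hB hmem.2).trans_eq interpolatedBall_one) hlt
  refine ⟨lineMap x z (sInf S), lineMap ε R (sInf S), (hradius _ ht₀).2, ?_,
    subset_of_forall_Ioo_subset isOpen_setOf_mem_interpolatedBall hpos hdense, hsparse⟩
  refine hB ht₀.1 ?_
  simpa only [B, interpolatedBall_zero] using mem_ball_self hε

theorem ball_ae_eq_closedBall {x : V} {r : ℝ} (hr : 0 < r) : ball x r =ᵐ[μ] closedBall x r :=
  ae_eq_of_subset_of_measure_ge ball_subset_closedBall
    (by rw [Measure.addHaar_closedBall μ x hr.le, Measure.addHaar_ball_of_pos μ x hr])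
    measurableSet_ball.nullMeasurableSet measure_closedBall_lt_top.ne

theorem ae_eventually_lt_measure_inter_ball {E : Set V} (hE : MeasurableSet E) :
    ∀ᵐ x ∂μ, x ∈ E → ∀ θ < 1, ∀ᶠ r in 𝓝[>] 0, θ * μ (ball x r) < μ (E ∩ ball x r) := by
  filter_upwards [Besicovitch.ae_tendsto_measure_inter_div_of_measurableSet μ hE]
    with x hx hxE θ hθ
  rw [indicator_of_mem hxE, Pi.one_apply] at hx
  filter_upwards [hx.eventually_const_lt hθ, self_mem_nhdsWithin] with r hr (hr0 : 0 < r)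
  rw [measure_congr (ball_ae_eq_closedBall μ hr0),
    measure_congr ((ae_eq_refl E).inter (ball_ae_eq_closedBall μ hr0))]
  exact (ENNReal.lt_div_iff_mul_lt (Or.inl (measure_closedBall_pos μ x hr0).ne')
    (Or.inl measure_closedBall_lt_top.ne)).1 hr

theorem ae_exists_ball_subset_ofReal_mul_le_measure_sdiff {E F : Set V} {ι : ℝ} (hι0 : 0 < ι)
    (hι1 : ι ≤ 1) (hE : MeasurableSet E) {z : V} {R : ℝ} (hEz : E ⊆ ball z R)
    (hz : μ E ≤ ENNReal.ofReal (1 - ι) * μ (ball z R))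
    (hF : ∀ y r, 0 < r → ball y r ⊆ ball z R →
      ENNReal.ofReal (1 - ι) * μ (ball y r) < μ (E ∩ ball y r) → ball y r ⊆ F) :
    ∀ᵐ x ∂μ, x ∈ E → ∃ y r, r ≤ R ∧ x ∈ ball y r ∧ ball y r ⊆ F ∧
      ENNReal.ofReal ι * μ (ball y r) ≤ μ (ball y r \ E) := by
  filter_upwards [ae_eventually_lt_measure_inter_ball μ hE] with x hx hxE
  have hxz : dist x z < R := hEz hxE
  have hθ : ENNReal.ofReal (1 - ι) < 1 := ENNReal.ofReal_lt_one.2 (by linarith)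
  obtain ⟨ε, hdense, hε⟩ := ((hx hxE _ hθ).and (Ioo_mem_nhdsGT (sub_pos.2 hxz))).exists
  obtain ⟨y, r, hrR, hxy, hyF, hsparse⟩ := exists_ball_subset_measure_inter_le_of_lt μ hε.1
    (by linarith [hε.2]) hdense (by rwa [inter_eq_self_of_subset_left hEz]) hF
  exact ⟨y, r, hrR, hxy, hyF, ofReal_mul_measure_le_measure_sdiff hE.nullMeasurableSet
    measure_ball_lt_top.ne hι0.le hι1 (by rwa [inter_comm])⟩

theorem addHaar_closedBall_mul_eq_mul_ball {x : V} {c r : ℝ} (hc : 0 ≤ c) (hr : 0 < r) :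
    μ (closedBall x (c * r)) = ENNReal.ofReal (c ^ Module.finrank ℝ V) * μ (ball x r) := by
  rw [Measure.addHaar_closedBall μ x (by positivity), Measure.addHaar_ball_of_pos μ x hr, mul_pow,
    ENNReal.ofReal_mul (by positivity), mul_assoc]

theorem mul_measure_le_measure_sdiff_of_ae_exists_ball {E F : Set V} (hE : MeasurableSet E)
    {δ : ℝ≥0∞} {R : ℝ}
    (H : ∀ᵐ x ∂μ, x ∈ E → ∃ y r, r ≤ R ∧ x ∈ ball y r ∧ ball y r ⊆ F ∧
      δ * μ (ball y r) ≤ μ (ball y r \ E)) :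
    δ * μ E ≤ ENNReal.ofReal (5 ^ Module.finrank ℝ V) * μ (F \ E) := by
  set E' := {x ∈ E | ∃ y r, r ≤ R ∧ x ∈ ball y r ∧ ball y r ⊆ F ∧
    δ * μ (ball y r) ≤ μ (ball y r \ E)}
  have hEE' : E ≤ᵐ[μ] E' := H.mono fun x hx hxE => ⟨hxE, hx hxE⟩
  choose! y r hrR hxy hyF hsparse using fun x (hx : x ∈ E') => hx.2
  obtain ⟨u, huE', hdisj, hcov⟩ :=
    Vitali.exists_disjoint_subfamily_covering_enlargement_closedBall E' y r R hrR 5 (by norm_num)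
  have hpos : ∀ a ∈ E', 0 < r a := fun a ha => pos_of_mem_ball (hxy a ha)
  have hdisj' : u.PairwiseDisjoint fun a => ball (y a) (r a) :=
    hdisj.mono fun _ => ball_subset_closedBall
  have hu : u.Countable := hdisj'.countable_of_isOpen (fun _ _ => isOpen_ball)
    fun a ha => ⟨y a, mem_ball_self (hpos a (huE' ha))⟩
  have hcover : E' ⊆ ⋃ a ∈ u, closedBall (y a) (5 * r a) := fun x hx => by
    obtain ⟨a, ha, hsub⟩ := hcov x hx
    exact mem_biUnion ha (hsub (ball_subset_closedBall (hxy x hx)))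
  calc δ * μ E ≤ δ * ∑' a : u, μ (closedBall (y a) (5 * r a)) := by
        gcongr
        exact (measure_mono_ae hEE').trans ((measure_mono hcover).trans (measure_biUnion_le μ hu _))
    _ = ENNReal.ofReal (5 ^ Module.finrank ℝ V) * ∑' a : u, δ * μ (ball (y a) (r a)) := by
        rw [← ENNReal.tsum_mul_left, ← ENNReal.tsum_mul_left]
        refine tsum_congr fun a => ?_
        rw [addHaar_closedBall_mul_eq_mul_ball μ (by norm_num) (hpos a (huE' a.2)), mul_left_comm]
    _ ≤ ENNReal.ofReal (5 ^ Module.finrank ℝ V) * ∑' a : u, μ (ball (y a) (r a) \ E) := by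
        gcongr with a
        exact hsparse a (huE' a.2)
    _ = ENNReal.ofReal (5 ^ Module.finrank ℝ V) * μ (⋃ a ∈ u, ball (y a) (r a) \ E) := by
        rw [measure_biUnion hu (hdisj'.mono fun _ => sdiff_subset)
          fun _ _ => measurableSet_ball.diff hE]
    _ ≤ ENNReal.ofReal (5 ^ Module.finrank ℝ V) * μ (F \ E) := by
        gcongr
        exact iUnion₂_subset fun a ha => sdiff_subset_sdiff_left (hyF a (huE' ha))

end AddHaar

/-- The crawling ink spots covering lemma (elliptic version). -/
theorem stmt6 (d : ℕ) :
    ∃ c : ℝ, 0 < c ∧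
      ∀ (E F : Set (EuclideanSpace ℝ (Fin d))) (ι : ℝ), 0 < ι →
        MeasurableSet E → MeasurableSet F →
        E ⊆ F → F ⊆ ball (0 : EuclideanSpace ℝ (Fin d)) (1/2) →
        volume E < ENNReal.ofReal (1 - ι) *
          volume (ball (0 : EuclideanSpace ℝ (Fin d)) (1/2)) →
        (∀ (x : EuclideanSpace ℝ (Fin d)) (r : ℝ), 0 < r →
          ball x r ⊆ ball (0 : EuclideanSpace ℝ (Fin d)) (1/2) →
          ENNReal.ofReal (1 - ι) * volume (ball x r) < volume (E ∩ ball x r) →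
          ball x r ⊆ F) →
        volume E ≤ ENNReal.ofReal (1 - c * ι) * volume F := by
  refine ⟨1 / (5 ^ d + 1), by positivity, ?_⟩
  intro E F ι hι hE _ hEF hFb hvol hball
  have hι1 : ι ≤ 1 := by
    by_contra! h
    rw [ENNReal.ofReal_of_nonpos (by linarith), zero_mul] at hvol
    exact ENNReal.not_lt_zero hvol
  have hcover := mul_measure_le_measure_sdiff_of_ae_exists_ball volume hE
    (ae_exists_ball_subset_ofReal_mul_le_measure_sdiff volume hι hι1 hE (hEF.trans hFb) hvol.le
      hball)
  rw [finrank_euclideanSpace_fin] at hcover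
  rw [one_div_mul_eq_div]
  exact measure_le_of_ofReal_mul_le_measure_sdiff hEF hE
    ((measure_mono hFb).trans_lt measure_ball_lt_top).ne hι.le hι1 (by positivity) hcover
end

section
/- Let $m \ge 1$ be an integer and for each $k$ let $a_k \in \mathbb{R}$ and $h_k > 0$. Then the Lebesgue measure of $\bigcup_k (a_k, a_k + m h_k)$ is at least $\frac{m}{m+1}$ times the Lebesgue measure of $\bigcup_k (a_k - h_k, a_k]$. -/
open MeasureTheory Set
open scoped ENNReal

/-- The measure of a countable union of stacked future intervals `(aₖ, aₖ + m hₖ)` is at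
least `m/(m+1)` times the measure of the union of the intervals `(aₖ - hₖ, aₖ]`. -/
theorem stmt9 (m : ℕ) (hm : 1 ≤ m) (ι : Type*) [Countable ι]
    (a : ι → ℝ) (h : ι → ℝ) (hh : ∀ k, 0 < h k) :
    ((m : ℝ≥0∞) / (m + 1)) * volume (⋃ k, Set.Ioc (a k - h k) (a k)) ≤
      volume (⋃ k, Set.Ioo (a k) (a k + (m : ℝ) * h k)) := by
  have hm1 : (1:ℝ) ≤ m := by exact_mod_cast hm
  have hm0 : (0:ℝ) < m := lt_of_lt_of_le one_pos hm1
  set F : Set ℝ := ⋃ k, Set.Ioo (a k) (a k + (m : ℝ) * h k) with hFdef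
  by_cases hFtop : volume F = ⊤
  · rw [hFtop]; exact le_top
  -- midpoints
  set p : ι → ℝ := fun k => a k + (m * h k) / 2 with hpdef
  have hpJ : ∀ k, p k ∈ Set.Ioo (a k) (a k + (m : ℝ) * h k) := by
    intro k
    have := hh k
    constructor <;> simp only [hpdef] <;> nlinarith
  have hpF : ∀ k, p k ∈ F := fun k => Set.mem_iUnion.2 ⟨k, hpJ k⟩
  set C : ι → Set ℝ := fun k => Set.ordConnectedComponent F (p k) with hCdef
  have hCF : ∀ k, C k ⊆ F := fun k => Set.ordConnectedComponent_subset
  have hJC : ∀ k, Set.Ioo (a k) (a k + (m : ℝ) * h k) ⊆ C k := fun k =>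
    Set.subset_ordConnectedComponent (hpJ k) (hFdef ▸ Set.subset_iUnion (fun k => Set.Ioo (a k) (a k + (m:ℝ) * h k)) k)
  have hne : ∀ k, (C k).Nonempty := fun k =>
    ⟨p k, Set.self_mem_ordConnectedComponent.2 (hpF k)⟩
  -- boundedness of components
  set M : ℝ := (volume F).toReal with hMdef
  have hbound : ∀ k, ∀ y ∈ C k, |y - p k| ≤ M := by
    intro k y hy
    have huIcc : Set.uIcc (p k) y ⊆ F := Set.mem_ordConnectedComponent.1 hy
    have : volume (Set.uIcc (p k) y) ≤ volume F := measure_mono huIcc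
    rw [Set.uIcc, Real.volume_Icc] at this
    have h1 : max (p k) y - min (p k) y = |y - p k| := by
      rcases le_total (p k) y with hc | hc
      · rw [max_eq_right hc, min_eq_left hc, abs_of_nonneg (by linarith)]
      · rw [max_eq_left hc, min_eq_right hc, abs_of_nonpos (by linarith)]; ring
    rw [h1] at this
    exact (ENNReal.ofReal_le_iff_le_toReal hFtop).1 this
  have hbddA : ∀ k, BddAbove (C k) := by
    intro k
    exact ⟨p k + M, fun y hy => by have := hbound k y hy; have := abs_le.1 this; linarith [this.2]⟩
  have hbddB : ∀ k, BddBelow (C k) := by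
    intro k
    exact ⟨p k - M, fun y hy => by have := hbound k y hy; have := abs_le.1 this; linarith [this.1]⟩
  set c : ι → ℝ := fun k => sInf (C k) with hcdef
  set d : ι → ℝ := fun k => sSup (C k) with hddef
  have hIooC : ∀ k, Set.Ioo (c k) (d k) ⊆ C k := by
    intro k z hz
    obtain ⟨u, huC, huz⟩ := exists_lt_of_csInf_lt (hne k) hz.1
    obtain ⟨v, hvC, hzv⟩ := exists_lt_of_lt_csSup (hne k) hz.2
    have : Set.OrdConnected (C k) := by
      simp only [hCdef]; infer_instance
    exact this.out huC hvC ⟨huz.le, hzv.le⟩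
  have hca : ∀ k, c k ≤ a k := by
    intro k
    have hnJ : (Set.Ioo (a k) (a k + (m:ℝ) * h k)).Nonempty :=
      Set.nonempty_Ioo.2 (by nlinarith [hh k])
    have := csInf_le_csInf (hbddB k) hnJ (hJC k)
    rwa [csInf_Ioo (by nlinarith [hh k])] at this
  have had : ∀ k, a k + (m:ℝ) * h k ≤ d k := by
    intro k
    have hnJ : (Set.Ioo (a k) (a k + (m:ℝ) * h k)).Nonempty :=
      Set.nonempty_Ioo.2 (by nlinarith [hh k])
    have := csSup_le_csSup (hbddA k) hnJ (hJC k)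
    rwa [csSup_Ioo (by nlinarith [hh k])] at this
  -- the enlargement covers E
  have hcover : (⋃ k, Set.Ioc (a k - h k) (a k)) ⊆
      ⋃ k, Set.Ioc (c k - (d k - c k) / m) (d k) := by
    intro x hx
    obtain ⟨k, hk⟩ := Set.mem_iUnion.1 hx
    refine Set.mem_iUnion.2 ⟨k, ?_, ?_⟩
    · have key : c k - (d k - c k) / m ≤ a k - h k := by
        rw [sub_le_iff_le_add, ← sub_le_iff_le_add']
        rw [le_div_iff₀ hm0] at *
        nlinarith [hca k, had k, hh k]
      exact lt_of_le_of_lt key hk.1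
    · have : a k ≤ d k := by nlinarith [had k, hh k]
      exact hk.2.trans this
  -- reindex by the set of (inf, sup) pairs of components
  set T : Set (ℝ × ℝ) := Set.range (fun k => (c k, d k)) with hTdef
  have hTc : T.Countable := Set.countable_range _
  -- components with the same endpoints coincide; distinct ones are disjoint
  have hdisj : T.PairwiseDisjoint (fun q : ℝ × ℝ => Set.Ioo q.1 q.2) := by
    rintro ⟨cj, dj⟩ ⟨j, hj⟩ ⟨ck, dk⟩ ⟨k, hk⟩ hne'
    simp only [Prod.mk.injEq] at hj hk
    refine Set.disjoint_left.2 fun z hzj hzk => hne' ?_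
    have hzCj : z ∈ C j := hIooC j (by rw [hj.1, hj.2]; exact hzj)
    have hzCk : z ∈ C k := hIooC k (by rw [hk.1, hk.2]; exact hzk)
    have hCjk : C j = C k := by
      have e1 : Set.ordConnectedComponent F (p j) = Set.ordConnectedComponent F z :=
        Set.ordConnectedComponent_eq (Set.mem_ordConnectedComponent.1 hzCj)
      have e2 : Set.ordConnectedComponent F (p k) = Set.ordConnectedComponent F z :=
        Set.ordConnectedComponent_eq (Set.mem_ordConnectedComponent.1 hzCk)
      simp only [hCdef]; rw [e1, e2]
    have : c j = c k ∧ d j = d k := by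
      constructor <;> simp only [hcdef, hddef, hCjk]
    rw [← hj.1, ← hj.2, ← hk.1, ← hk.2, this.1, this.2]
  set K : ℝ≥0∞ := ((m : ℝ≥0∞) + 1) / m with hKdef
  have hKofReal : K = ENNReal.ofReal (1 + 1 / m) := by
    rw [hKdef]
    rw [ENNReal.ofReal_add zero_le_one (by positivity), ENNReal.ofReal_one,
      ENNReal.ofReal_div_of_pos hm0, ENNReal.ofReal_one, ENNReal.ofReal_natCast]
    rw [ENNReal.div_eq_inv_mul, ENNReal.div_eq_inv_mul, mul_add, mul_one]
    rw [ENNReal.inv_mul_cancel (Nat.cast_ne_zero.mpr (by omega) : (m:ℝ≥0∞) ≠ 0) (ENNReal.natCast_ne_top m)]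
  -- main estimate
  have hmain : volume (⋃ k, Set.Ioc (a k - h k) (a k)) ≤ K * volume F := by
    calc volume (⋃ k, Set.Ioc (a k - h k) (a k))
        ≤ volume (⋃ k, Set.Ioc (c k - (d k - c k) / m) (d k)) := measure_mono hcover
      _ = volume (⋃ q ∈ T, Set.Ioc (q.1 - (q.2 - q.1) / m) q.2) := by
          rw [hTdef, Set.biUnion_range]
      _ ≤ ∑' q : T, volume (Set.Ioc ((q : ℝ × ℝ).1 - ((q : ℝ × ℝ).2 - (q : ℝ × ℝ).1) / m) (q : ℝ × ℝ).2) :=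
          measure_biUnion_le volume hTc _
      _ = ∑' q : T, K * volume (Set.Ioo (q : ℝ × ℝ).1 (q : ℝ × ℝ).2) := by
          refine tsum_congr fun q => ?_
          rw [Real.volume_Ioc, Real.volume_Ioo, hKofReal, ← ENNReal.ofReal_mul (by positivity)]
          congr 1
          ring
      _ = K * ∑' q : T, volume (Set.Ioo (q : ℝ × ℝ).1 (q : ℝ × ℝ).2) := ENNReal.tsum_mul_left
      _ = K * volume (⋃ q ∈ T, Set.Ioo q.1 q.2) := by
          rw [measure_biUnion hTc hdisj fun q _ => measurableSet_Ioo]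
      _ ≤ K * volume F := by
          refine mul_le_mul_right (measure_mono ?_) K
          refine Set.iUnion₂_subset ?_
          rintro ⟨cq, dq⟩ ⟨k, hk⟩
          simp only [Prod.mk.injEq] at hk
          rw [← hk.1, ← hk.2]
          exact (hIooC k).trans (hCF k)
  -- conclude
  have hm0' : (m : ℝ≥0∞) ≠ 0 := Nat.cast_ne_zero.mpr (by omega)
  have hmt : (m : ℝ≥0∞) ≠ ⊤ := ENNReal.natCast_ne_top m
  have hm10 : (m : ℝ≥0∞) + 1 ≠ 0 := by simp [add_eq_zero]
  have hm1t : (m : ℝ≥0∞) + 1 ≠ ⊤ := by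
    simp [ENNReal.add_ne_top, hmt]
  calc ((m : ℝ≥0∞) / (m + 1)) * volume (⋃ k, Set.Ioc (a k - h k) (a k))
      ≤ ((m : ℝ≥0∞) / (m + 1)) * (K * volume F) := mul_le_mul_right hmain _
    _ = (((m : ℝ≥0∞) / (m + 1)) * K) * volume F := by ring
    _ = volume F := by
        have e : ((m : ℝ≥0∞) / (m + 1)) * K = 1 := by
          rw [hKdef, ← mul_div_assoc, ENNReal.div_mul_cancel hm10 hm1t,
            ENNReal.div_self hm0' hmt]
        rw [e, one_mul]
end

section
/- Let $\{Q_j\}$ be a countable family of parabolic cylinders $Q_j = (t_j - r_j^2, t_j] \times B_{r_j}(x_j)$ and for an integer $m \ge 1$ let $\bar Q_j^m = (t_j, t_j + m r_j^2) \times B_{r_j}(x_j)$ be the corresponding stacked cylinders. Then $|\bigcup_j \bar Q_j^m| \ge \frac{m}{m+1} |\bigcup_j Q_j|$. -/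
open MeasureTheory Metric Set
open scoped ENNReal

/-- The parabolic cylinder `(t₀ - r², t₀] × B_r(x₀)` in `ℝ × ℝᵈ`. -/
def pCyl (d : ℕ) (r t₀ : ℝ) (x₀ : EuclideanSpace ℝ (Fin d)) :
    Set (ℝ × EuclideanSpace ℝ (Fin d)) :=
  Set.Ioc (t₀ - r ^ 2) t₀ ×ˢ ball x₀ r

/-- The stacked parabolic cylinder `(t₀, t₀ + m r²) × B_r(x₀)`. -/
def pStack (d : ℕ) (m : ℕ) (r t₀ : ℝ) (x₀ : EuclideanSpace ℝ (Fin d)) :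
    Set (ℝ × EuclideanSpace ℝ (Fin d)) :=
  Set.Ioo t₀ (t₀ + (m : ℝ) * r ^ 2) ×ˢ ball x₀ r

lemma vol_split {s : Set ℝ} (hs : MeasurableSet s) {x y : ℝ} (hxy : x ≤ y) :
    volume (s ∩ Ioi x) = volume (s ∩ Ioc x y) + volume (s ∩ Ioi y) := by
  rw [← measure_union (Ioc_disjoint_Ioi_same.mono inter_subset_right inter_subset_right)
      (hs.inter measurableSet_Ioi), ← inter_union_distrib_left, Ioc_union_Ioi_eq_Ioi hxy]

lemma Ebound (m : ℕ) (ι : Type*) [Fintype ι] (b ℓ : ι → ℝ) (hℓ : ∀ j, 0 < ℓ j) :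
    (m : ℝ≥0∞) * volume ((⋃ j, Ioc (b j - ℓ j) (b j)) \ ⋃ j, Ioo (b j) (b j + m * ℓ j))
      ≤ volume (⋃ j, Ioo (b j) (b j + m * ℓ j)) := by
  rcases isEmpty_or_nonempty ι with h | h
  · simp
  set U : Set ℝ := ⋃ j, Ioc (b j - ℓ j) (b j) with hUdef
  set V : Set ℝ := ⋃ j, Ioo (b j) (b j + m * ℓ j) with hVdef
  set E : Set ℝ := U \ V with hEdef
  have hUm : MeasurableSet U := MeasurableSet.iUnion fun j => measurableSet_Ioc
  have hVm : MeasurableSet V := MeasurableSet.iUnion fun j => measurableSet_Ioo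
  have hEm : MeasurableSet E := hUm.diff hVm
  obtain ⟨A, hA⟩ : ∃ A, ∀ j, A ≤ b j - ℓ j :=
    ⟨Finset.univ.inf' Finset.univ_nonempty (fun j => b j - ℓ j),
      fun j => Finset.inf'_le (fun j => b j - ℓ j) (Finset.mem_univ j)⟩
  obtain ⟨B, hB⟩ : ∃ B, ∀ j, b j + m * ℓ j ≤ B :=
    ⟨Finset.univ.sup' Finset.univ_nonempty (fun j => b j + m * ℓ j),
      fun j => Finset.le_sup' (fun j => b j + m * ℓ j) (Finset.mem_univ j)⟩
  have hml : ∀ j, (0:ℝ) ≤ m * ℓ j := fun j => mul_nonneg (Nat.cast_nonneg m) (hℓ j).le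
  have hUsub : U ⊆ Ioc A B := by
    rintro u hu
    rw [hUdef, mem_iUnion] at hu
    obtain ⟨j, hj⟩ := hu
    exact ⟨lt_of_le_of_lt (hA j) hj.1,
      hj.2.trans (le_trans (le_add_of_nonneg_right (hml j)) (hB j))⟩
  have hVsub : V ⊆ Ioc A B := by
    rintro v hv
    rw [hVdef, mem_iUnion] at hv
    obtain ⟨j, hj⟩ := hv
    refine ⟨lt_of_le_of_lt (hA j) (lt_trans (by linarith [hℓ j]) hj.1), hj.2.le.trans (hB j)⟩
  have hEsub : E ⊆ Ioc A B := fun e he => hUsub he.1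
  have hfin : ∀ s : Set ℝ, s ⊆ Ioc A B → ∀ x : ℝ, volume (s ∩ Ioi x) ≠ ⊤ := by
    intro s hs x
    exact ((measure_mono (inter_subset_left.trans hs)).trans_lt
      (by rw [Real.volume_Ioc]; exact ENNReal.ofReal_lt_top)).ne
  have hIocfin : ∀ (s : Set ℝ) (x y : ℝ), volume (s ∩ Ioc x y) ≠ ⊤ := by
    intro s x y
    exact ((measure_mono inter_subset_right).trans_lt
      (by rw [Real.volume_Ioc]; exact ENNReal.ofReal_lt_top)).ne
  have hIocle : ∀ (s : Set ℝ) (x y : ℝ), x ≤ y → (volume (s ∩ Ioc x y)).toReal ≤ y - x := by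
    intro s x y hxy
    have h1 : volume (s ∩ Ioc x y) ≤ ENNReal.ofReal (y - x) := by
      rw [← Real.volume_Ioc]; exact measure_mono inter_subset_right
    calc (volume (s ∩ Ioc x y)).toReal ≤ (ENNReal.ofReal (y - x)).toReal :=
          ENNReal.toReal_mono ENNReal.ofReal_ne_top h1
      _ = y - x := ENNReal.toReal_ofReal (by linarith)
  set f : ℝ → ℝ := fun x => (volume (V ∩ Ioi x)).toReal - m * (volume (E ∩ Ioi x)).toReal
    with hfdef
  have hVfin := hfin V hVsub
  have hEfin := hfin E hEsub
  have hsplit : ∀ (s : Set ℝ), MeasurableSet s → s ⊆ Ioc A B → ∀ x y : ℝ, x ≤ y →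
      (volume (s ∩ Ioi x)).toReal
        = (volume (s ∩ Ioc x y)).toReal + (volume (s ∩ Ioi y)).toReal := by
    intro s hsm hssub x y hxy
    rw [vol_split hsm hxy, ENNReal.toReal_add (hIocfin s x y) (hfin s hssub y)]
  have hfd : ∀ x y : ℝ, x ≤ y →
      f x = f y + (volume (V ∩ Ioc x y)).toReal - m * (volume (E ∩ Ioc x y)).toReal := by
    intro x y hxy
    simp only [hfdef]
    rw [hsplit V hVm hVsub x y hxy, hsplit E hEm hEsub x y hxy]
    ring
  have hcont : Continuous f := by
    have key : ∀ s : Set ℝ, MeasurableSet s → s ⊆ Ioc A B →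
        Continuous (fun x => (volume (s ∩ Ioi x)).toReal) := by
      intro s hsm hssub
      refine (LipschitzWith.of_dist_le_mul (K := 1) ?_).continuous
      intro x y
      wlog hxy : y ≤ x generalizing x y
      · rw [dist_comm, dist_comm x y]; exact this y x (le_of_not_ge hxy)
      rw [hsplit s hsm hssub y x hxy, Real.dist_eq, Real.dist_eq]
      have h2 := hIocle s y x hxy
      have h3 : (0:ℝ) ≤ (volume (s ∩ Ioc y x)).toReal := ENNReal.toReal_nonneg
      rw [abs_of_nonpos (by linarith), abs_of_nonneg (by linarith)]
      push_cast
      linarith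
    exact (key V hVm hVsub).sub (continuous_const.mul (key E hEm hEsub))
  have hf0 : ∀ x : ℝ, B ≤ x → f x = 0 := by
    intro x hx
    have hemp : ∀ s : Set ℝ, s ⊆ Ioc A B → s ∩ Ioi x = ∅ := by
      intro s hs
      ext e
      simp only [mem_inter_iff, mem_Ioi, mem_empty_iff_false, iff_false, not_and, not_lt]
      exact fun he => le_trans (hs he).2 hx
    simp [hfdef, hemp V hVsub, hemp E hEsub]
  have hfpos : ∀ x : ℝ, 0 ≤ f x := by
    by_contra hc
    push_neg at hc
    obtain ⟨x₀, hx₀⟩ := hc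
    set S : Set ℝ := {x | f x ≤ f x₀} with hSdef
    have hSne : x₀ ∈ S := by simp only [hSdef, mem_setOf_eq]; exact le_rfl
    have hSbdd : BddAbove S := by
      refine ⟨B, fun x hx => ?_⟩
      by_contra hxB
      push_neg at hxB
      have h1 := hf0 x hxB.le
      have h2 : f x ≤ f x₀ := hx
      linarith
    have hSclosed : IsClosed S := isClosed_le hcont continuous_const
    set T := sSup S with hTdef
    have hTS : f T ≤ f x₀ := hSclosed.csSup_mem ⟨x₀, hSne⟩ hSbdd
    have hgt : ∀ x, T < x → f x₀ < f x := by
      intro x hx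
      by_contra hle
      push_neg at hle
      exact absurd (le_csSup hSbdd hle) (not_le.2 hx)
    have key : ∀ η : ℝ, 0 < η → volume (E ∩ Ioc T (T + η)) ≠ 0 := by
      intro η hη h0
      have hd := hfd T (T + η) (by linarith)
      rw [h0] at hd
      simp only [ENNReal.toReal_zero, mul_zero, sub_zero] at hd
      have h1 : (0:ℝ) ≤ (volume (V ∩ Ioc T (T + η))).toReal := ENNReal.toReal_nonneg
      have h2 := hgt (T + η) (by linarith)
      linarith
    have hj : ∃ j, ∀ η : ℝ, 0 < η →
        volume (Ioc (b j - ℓ j) (b j) ∩ Ioc T (T + η)) ≠ 0 := by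
      by_contra hcon
      push_neg at hcon
      choose η₀ hη₀pos hη₀ using hcon
      set η := Finset.univ.inf' Finset.univ_nonempty η₀ with hηdef
      have hηpos : 0 < η := by
        rw [hηdef, Finset.lt_inf'_iff]
        exact fun j _ => hη₀pos j
      refine key η hηpos ?_
      have hsub : E ∩ Ioc T (T + η) ⊆
          ⋃ j, (Ioc (b j - ℓ j) (b j) ∩ Ioc T (T + η₀ j)) := by
        rintro e ⟨heE, heI⟩
        have heU : e ∈ U := heE.1
        rw [hUdef, mem_iUnion] at heU
        obtain ⟨j, hj'⟩ := heU
        have hηle : η ≤ η₀ j := Finset.inf'_le _ (Finset.mem_univ j)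
        exact mem_iUnion.2 ⟨j, hj', heI.1, heI.2.trans (by linarith)⟩
      exact measure_mono_null hsub (measure_iUnion_null fun j => hη₀ j)
    obtain ⟨j, hjkey⟩ := hj
    have hlt : ∀ η : ℝ, 0 < η → (b j - ℓ j) ⊔ T < (b j) ⊓ (T + η) := by
      intro η hη
      have h1 := hjkey η hη
      rw [Ioc_inter_Ioc, Real.volume_Ioc] at h1
      by_contra hle
      push_neg at hle
      exact h1 (by rw [ENNReal.ofReal_eq_zero]; linarith)
    have hTb : T < b j := by
      have h1 := hlt 1 one_pos
      have h2 := le_sup_right (a := b j - ℓ j) (b := T)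
      have h3 := inf_le_left (a := b j) (b := T + 1)
      linarith
    have haT : b j - ℓ j ≤ T := by
      by_contra hcon2
      push_neg at hcon2
      have h1 := hlt (b j - ℓ j - T) (by linarith)
      have h2 := le_sup_left (a := b j - ℓ j) (b := T)
      have h3 := inf_le_right (a := b j) (b := T + (b j - ℓ j - T))
      linarith
    set z := b j + m * ℓ j with hzdef
    have hbz : b j ≤ z := by rw [hzdef]; linarith [hml j]
    have hTz : T ≤ z := le_trans hTb.le hbz
    have hd := hfd T z hTz
    have hV1 : (m : ℝ) * ℓ j ≤ (volume (V ∩ Ioc T z)).toReal := by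
      have hsub : Ioo (b j) z ⊆ V ∩ Ioc T z := by
        rintro v ⟨h1, h2⟩
        exact ⟨mem_iUnion.2 ⟨j, h1, h2⟩, lt_trans hTb h1, h2.le⟩
      have h1 : volume (Ioo (b j) z) ≤ volume (V ∩ Ioc T z) := measure_mono hsub
      rw [Real.volume_Ioo] at h1
      have h2 := ENNReal.toReal_mono (hIocfin V T z) h1
      rw [ENNReal.toReal_ofReal (by rw [hzdef]; linarith [hml j])] at h2
      rw [hzdef] at h2
      linarith
    have hE1 : (volume (E ∩ Ioc T z)).toReal ≤ ℓ j := by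
      have hsub : E ∩ Ioc T z ⊆ Ioc T (b j) ∪ {z} := by
        rintro e ⟨heE, hT', hz'⟩
        rcases le_or_gt e (b j) with h | h
        · exact Or.inl ⟨hT', h⟩
        rcases eq_or_lt_of_le hz' with h' | h'
        · exact Or.inr h'
        exact absurd (mem_iUnion.2 ⟨j, h, h'⟩ : e ∈ V) heE.2
      have hm1 : volume (E ∩ Ioc T z) ≤ volume (Ioc T (b j) ∪ ({z} : Set ℝ)) := measure_mono hsub
      have hm2 : volume (Ioc T (b j) ∪ ({z} : Set ℝ)) ≤ ENNReal.ofReal (b j - T) := by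
        refine le_trans (measure_union_le _ _) ?_
        simp [Real.volume_Ioc, Real.volume_singleton]
      have h3 := ENNReal.toReal_mono ENNReal.ofReal_ne_top (hm1.trans hm2)
      rw [ENNReal.toReal_ofReal (by linarith)] at h3
      linarith
    have hfz : f x₀ < f z := hgt z (lt_of_lt_of_le hTb hbz)
    have hmul : (m:ℝ) * (volume (E ∩ Ioc T z)).toReal ≤ (m:ℝ) * ℓ j :=
      mul_le_mul_of_nonneg_left hE1 (Nat.cast_nonneg m)
    linarith
  have h := hfpos A
  have hVA : V ∩ Ioi A = V := inter_eq_left.2 fun v hv => (hVsub hv).1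
  have hEA : E ∩ Ioi A = E := inter_eq_left.2 fun e he => (hEsub he).1
  simp only [hfdef, hVA, hEA] at h
  have hVne : volume V ≠ ⊤ := by rw [← hVA]; exact hVfin A
  have hEne : volume E ≠ ⊤ := by rw [← hEA]; exact hEfin A
  rw [← ENNReal.toReal_le_toReal (ENNReal.mul_ne_top (ENNReal.natCast_ne_top m) hEne) hVne,
    ENNReal.toReal_mul, ENNReal.toReal_natCast]
  linarith

lemma oneDimFin (m : ℕ) (ι : Type*) [Fintype ι] (b ℓ : ι → ℝ) (hℓ : ∀ j, 0 < ℓ j) :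
    (m : ℝ≥0∞) / (m + 1) * volume (⋃ j, Ioc (b j - ℓ j) (b j))
      ≤ volume (⋃ j, Ioo (b j) (b j + m * ℓ j)) := by
  set U : Set ℝ := ⋃ j, Ioc (b j - ℓ j) (b j) with hUdef
  set V : Set ℝ := ⋃ j, Ioo (b j) (b j + m * ℓ j) with hVdef
  have hVm : MeasurableSet V := MeasurableSet.iUnion fun j => measurableSet_Ioo
  have h1 : (m : ℝ≥0∞) * volume U ≤ ((m : ℝ≥0∞) + 1) * volume V := by
    have h2 := Ebound m ι b ℓ hℓ
    have h3 : volume U = volume (U ∩ V) + volume (U \ V) := (measure_inter_add_diff U hVm).symm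
    calc (m : ℝ≥0∞) * volume U = m * volume (U ∩ V) + m * volume (U \ V) := by
          rw [h3, mul_add]
      _ ≤ m * volume V + volume V :=
          add_le_add (mul_le_mul_right (measure_mono inter_subset_right) _) h2
      _ = ((m : ℝ≥0∞) + 1) * volume V := by ring
  have hne : ((m : ℝ≥0∞) + 1) ≠ 0 := by simp
  have hnetop : ((m : ℝ≥0∞) + 1) ≠ ⊤ := by
    simp [ENNReal.add_eq_top, ENNReal.natCast_ne_top]
  have h4 := mul_le_mul_right h1 ((m : ℝ≥0∞) + 1)⁻¹
  rw [← mul_assoc, ← mul_assoc, ENNReal.inv_mul_cancel hne hnetop, one_mul] at h4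
  calc (m : ℝ≥0∞) / (m + 1) * volume U
      = ((m : ℝ≥0∞) + 1)⁻¹ * ((m : ℝ≥0∞) * volume U) := by
        rw [div_eq_mul_inv, mul_comm (m : ℝ≥0∞), mul_assoc]
    _ ≤ volume V := by rw [← mul_assoc]; exact h4

lemma oneDimCtble (m : ℕ) (ι : Type*) [Countable ι] (b ℓ : ι → ℝ) (hℓ : ∀ j, 0 < ℓ j) :
    (m : ℝ≥0∞) / (m + 1) * volume (⋃ j, Ioc (b j - ℓ j) (b j))
      ≤ volume (⋃ j, Ioo (b j) (b j + m * ℓ j)) := by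
  classical
  have hdir : Directed (· ⊆ ·) (fun F : Finset ι => ⋃ j ∈ F, Ioc (b j - ℓ j) (b j)) := by
    intro F G
    exact ⟨F ∪ G, biUnion_subset_biUnion_left F.subset_union_left,
      biUnion_subset_biUnion_left F.subset_union_right⟩
  have hU : (⋃ j, Ioc (b j - ℓ j) (b j)) = ⋃ F : Finset ι, ⋃ j ∈ F, Ioc (b j - ℓ j) (b j) := by
    ext u
    simp only [mem_iUnion]
    constructor
    · rintro ⟨j, hj⟩; exact ⟨{j}, j, Finset.mem_singleton_self j, hj⟩
    · rintro ⟨F, j, _, hj⟩; exact ⟨j, hj⟩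
  rw [hU, Directed.measure_iUnion hdir, ENNReal.mul_iSup]
  refine iSup_le fun F => ?_
  have heq : (⋃ j ∈ F, Ioc (b j - ℓ j) (b j))
      = ⋃ j : F, Ioc (b j.1 - ℓ j.1) (b j.1) := by
    ext u; simp
  rw [heq]
  calc (m : ℝ≥0∞) / (m + 1) * volume (⋃ j : F, Ioc (b j.1 - ℓ j.1) (b j.1))
      ≤ volume (⋃ j : F, Ioo (b j.1) (b j.1 + m * ℓ j.1)) :=
        oneDimFin m F (fun j => b j.1) (fun j => ℓ j.1) (fun j => hℓ j.1)
    _ ≤ volume (⋃ j, Ioo (b j) (b j + m * ℓ j)) :=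
        measure_mono (iUnion_subset fun j => subset_iUnion_of_subset j.1 subset_rfl)

/-- Overlapping stacked parabolic cylinders: the union of the stacked cylinders has
measure at least `m/(m+1)` times the measure of the union of the original cylinders. -/
theorem stmt10 (d : ℕ) (m : ℕ) (hm : 1 ≤ m) (ι : Type*) [Countable ι]
    (r t : ι → ℝ) (x : ι → EuclideanSpace ℝ (Fin d)) (hr : ∀ j, 0 < r j) :
    ((m : ℝ≥0∞) / (m + 1)) * volume (⋃ j, pCyl d (r j) (t j) (x j)) ≤
      volume (⋃ j, pStack d m (r j) (t j) (x j)) := by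
  have hmeasU : MeasurableSet (⋃ j, pCyl d (r j) (t j) (x j)) :=
    MeasurableSet.iUnion fun j => measurableSet_Ioc.prod measurableSet_ball
  have hmeasV : MeasurableSet (⋃ j, pStack d m (r j) (t j) (x j)) :=
    MeasurableSet.iUnion fun j => measurableSet_Ioo.prod measurableSet_ball
  have hc : (m : ℝ≥0∞) / (m + 1) ≠ ⊤ :=
    (ENNReal.div_lt_top (ENNReal.natCast_ne_top m) (by simp)).ne
  rw [Measure.volume_eq_prod, Measure.prod_apply_symm hmeasU, Measure.prod_apply_symm hmeasV,
    ← lintegral_const_mul' _ _ hc]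
  refine lintegral_mono fun y => ?_
  have hU : ((fun s => (s, y)) ⁻¹' ⋃ j, pCyl d (r j) (t j) (x j))
      = ⋃ j : {j // y ∈ ball (x j) (r j)}, Ioc (t j.1 - r j.1 ^ 2) (t j.1) := by
    ext s
    simp only [pCyl, mem_preimage, mem_iUnion, mem_prod, mem_Ioc]
    constructor
    · rintro ⟨j, hj1, hj2⟩; exact ⟨⟨j, hj2⟩, hj1⟩
    · rintro ⟨⟨j, hj2⟩, hj1⟩; exact ⟨j, hj1, hj2⟩
  have hV : ((fun s => (s, y)) ⁻¹' ⋃ j, pStack d m (r j) (t j) (x j))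
      = ⋃ j : {j // y ∈ ball (x j) (r j)}, Ioo (t j.1) (t j.1 + m * r j.1 ^ 2) := by
    ext s
    simp only [pStack, mem_preimage, mem_iUnion, mem_prod, mem_Ioo]
    constructor
    · rintro ⟨j, hj1, hj2⟩; exact ⟨⟨j, hj2⟩, hj1⟩
    · rintro ⟨⟨j, hj2⟩, hj1⟩; exact ⟨j, hj1, hj2⟩
  rw [hU, hV]
  exact oneDimCtble m {j // y ∈ ball (x j) (r j)} (fun j => t j.1) (fun j => r j.1 ^ 2)
    (fun j => pow_pos (hr j.1) 2)
end

section
/- Define the kinetic distance $d_{\mathrm{kin}}(z_1,z_2)$ between points of $\mathbb{R}^{1+2d}$ as the infimum over $r > 0$ such that there exists $z$ with $z_1, z_2 \in Q_r(z)$, where $Q_r(z) = \{z \circ \zeta : \zeta \in Q_r\}$. Then $d_{\mathrm{kin}}(z_1,z_2) = \min_{w \in \mathbb{R}^d} \max\big(|t_1-t_2|^{1/2}, |v_1-w|, |v_2-w|, 2^{-1/3}|(x_1-x_2) - (t_1-t_2)w|^{1/3}\big)$. -/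
/-! Both points lie in `Q_r(t, x, w)` exactly when, after moving to the frame of velocity `w`,
their time gap is below `r²`, their velocities are within `r` of `w`, and their positions lie in
a common ball of radius `r³`; the last condition holds for a suitable `x` iff the Galilean
displacement `(x₁ - x₂) - (t₁ - t₂) w` is shorter than `2 r³`. Hence the admissible radii form
the open ray above `min_w kdistCand z₁ z₂ w`, and the minimum exists because `kdistCand` is
continuous and grows at least like `‖v₁ - w‖`. -/

/-- A point of the kinetic phase space `ℝ × ℝᵈ × ℝᵈ` (time, position, velocity). -/
abbrev KPt (d : ℕ) := ℝ × EuclideanSpace ℝ (Fin d) × EuclideanSpace ℝ (Fin d)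

/-- The Galilean group operation `z₀ ∘ z = (t₀ + t, x₀ + x + t v₀, v₀ + v)`. -/
noncomputable def kOp {d : ℕ} (z₀ z : KPt d) : KPt d :=
  (z₀.1 + z.1, z₀.2.1 + z.2.1 + z.1 • z₀.2.2, z₀.2.2 + z.2.2)

/-- The Galilean inverse `z⁻¹ = (-t, -x + t v, -v)`. -/
noncomputable def kInv {d : ℕ} (z : KPt d) : KPt d :=
  (-z.1, -z.2.1 + z.1 • z.2.2, -z.2.2)

/-- The kinetic cylinder `Q_r = (-r², 0] × B_{r³} × B_r` centered at the origin. -/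
def kCyl (d : ℕ) (r : ℝ) : Set (KPt d) :=
  Set.Ioc (-r ^ 2) 0 ×ˢ Metric.ball 0 (r ^ 3) ×ˢ Metric.ball 0 r

/-- The kinetic cylinder `Q_r(z₀) = {z₀ ∘ ζ : ζ ∈ Q_r}` centered at `z₀`. -/
def kCylAt {d : ℕ} (z₀ : KPt d) (r : ℝ) : Set (KPt d) := kOp z₀ '' kCyl d r

/-- The kinetic distance: the infimum of the radii `r > 0` such that both points belong
to a common kinetic cylinder `Q_r(z)`. -/
noncomputable def kdist {d : ℕ} (z₁ z₂ : KPt d) : ℝ :=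
  sInf {r : ℝ | 0 < r ∧ ∃ z : KPt d, z₁ ∈ kCylAt z r ∧ z₂ ∈ kCylAt z r}

/-- The quantity `max(|t₁-t₂|^{1/2}, |v₁-w|, |v₂-w|, 2^{-1/3} |(x₁-x₂)-(t₁-t₂)w|^{1/3})`. -/
noncomputable def kdistCand {d : ℕ} (z₁ z₂ : KPt d)
    (w : EuclideanSpace ℝ (Fin d)) : ℝ :=
  max (|z₁.1 - z₂.1| ^ ((1 : ℝ) / 2))
    (max ‖z₁.2.2 - w‖ (max ‖z₂.2.2 - w‖
      ((2 : ℝ) ^ (-(1 : ℝ) / 3) *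
        ‖(z₁.2.1 - z₂.2.1) - (z₁.1 - z₂.1) • w‖ ^ ((1 : ℝ) / 3))))

open Filter

lemma rpow_one_half_lt_iff {a r : ℝ} (ha : 0 ≤ a) (hr : 0 < r) :
    a ^ ((1 : ℝ) / 2) < r ↔ a < r ^ 2 := by
  rw [one_div, Real.rpow_inv_lt_iff_of_pos ha hr.le two_pos, Real.rpow_two]

lemma two_rpow_neg_third_mul_rpow_lt_iff {b r : ℝ} (hb : 0 ≤ b) (hr : 0 < r) :
    (2 : ℝ) ^ (-(1 : ℝ) / 3) * b ^ ((1 : ℝ) / 3) < r ↔ b < 2 * r ^ 3 := by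
  have h : (2 : ℝ) ^ (-(1 : ℝ) / 3) * b ^ ((1 : ℝ) / 3) = (b / 2) ^ ((1 : ℝ) / 3) := by
    rw [Real.div_rpow hb zero_le_two, neg_div, Real.rpow_neg zero_le_two, inv_mul_eq_div]
  rw [h, one_div, Real.rpow_inv_lt_iff_of_pos (by positivity) hr.le three_pos,
    div_lt_iff₀' two_pos, Real.rpow_ofNat]

section Kinetic

variable {d : ℕ}

lemma kOp_kInv (z z' : KPt d) :
    kOp (kInv z) z' = (z'.1 - z.1, z'.2.1 - z.2.1 - (z'.1 - z.1) • z.2.2, z'.2.2 - z.2.2) := by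
  simp only [kOp, kInv]
  refine Prod.ext ?_ (Prod.ext ?_ ?_) <;> dsimp only <;> module

lemma kOp_kInv_kOp (z ζ : KPt d) : kOp (kInv z) (kOp z ζ) = ζ := by
  rw [kOp_kInv]
  simp only [kOp]
  refine Prod.ext ?_ (Prod.ext ?_ ?_) <;> dsimp only <;> module

lemma kOp_kOp_kInv (z z' : KPt d) : kOp z (kOp (kInv z) z') = z' := by
  rw [kOp_kInv]
  simp only [kOp]
  refine Prod.ext ?_ (Prod.ext ?_ ?_) <;> dsimp only <;> module

lemma mem_kCylAt_iff {z z' : KPt d} {r : ℝ} :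
    z' ∈ kCylAt z r ↔ z'.1 - z.1 ∈ Set.Ioc (-r ^ 2) 0 ∧
      ‖z'.2.1 - z.2.1 - (z'.1 - z.1) • z.2.2‖ < r ^ 3 ∧ ‖z'.2.2 - z.2.2‖ < r := by
  have hinv : z' ∈ kCylAt z r ↔ kOp (kInv z) z' ∈ kCyl d r := by
    constructor
    · rintro ⟨ζ, hζ, rfl⟩
      rwa [kOp_kInv_kOp]
    · exact fun h ↦ ⟨_, h, kOp_kOp_kInv z z'⟩
  rw [hinv, kOp_kInv]
  simp only [kCyl, Set.mem_prod, mem_ball_zero_iff]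

lemma kdistCand_nonneg (z₁ z₂ : KPt d) (w : EuclideanSpace ℝ (Fin d)) :
    0 ≤ kdistCand z₁ z₂ w :=
  (Real.rpow_nonneg (abs_nonneg _) _).trans (le_max_left _ _)

lemma norm_sub_le_kdistCand (z₁ z₂ : KPt d) (w : EuclideanSpace ℝ (Fin d)) :
    ‖z₁.2.2 - w‖ ≤ kdistCand z₁ z₂ w :=
  (le_max_left _ _).trans (le_max_right _ _)

lemma continuous_kdistCand (z₁ z₂ : KPt d) : Continuous (kdistCand z₁ z₂) := by
  unfold kdistCand
  refine continuous_const.max ((by fun_prop : Continuous _).max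
    ((by fun_prop : Continuous _).max (continuous_const.mul ?_)))
  exact (by fun_prop : Continuous _).rpow_const fun _ ↦ Or.inr (by norm_num)

lemma exists_forall_kdistCand_le (z₁ z₂ : KPt d) :
    ∃ w, ∀ w', kdistCand z₁ z₂ w ≤ kdistCand z₁ z₂ w' :=
  (continuous_kdistCand z₁ z₂).exists_forall_le <|
    tendsto_atTop_mono (fun w ↦ (dist_eq_norm _ _).trans_le (norm_sub_le_kdistCand z₁ z₂ w))
      (tendsto_dist_left_cocompact_atTop z₁.2.2)

lemma kdistCand_lt_iff {z₁ z₂ : KPt d} {w : EuclideanSpace ℝ (Fin d)} {r : ℝ} (hr : 0 < r) :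
    kdistCand z₁ z₂ w < r ↔ |z₁.1 - z₂.1| < r ^ 2 ∧ ‖z₁.2.2 - w‖ < r ∧ ‖z₂.2.2 - w‖ < r ∧
      ‖(z₁.2.1 - z₂.2.1) - (z₁.1 - z₂.1) • w‖ < 2 * r ^ 3 := by
  simp only [kdistCand, max_lt_iff, rpow_one_half_lt_iff (abs_nonneg _) hr,
    two_rpow_neg_third_mul_rpow_lt_iff (norm_nonneg _) hr]

lemma kdistCand_lt_of_mem_kCylAt {z₁ z₂ z : KPt d} {r : ℝ}
    (h₁ : z₁ ∈ kCylAt z r) (h₂ : z₂ ∈ kCylAt z r) : kdistCand z₁ z₂ z.2.2 < r := by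
  obtain ⟨⟨ht₁, ht₁'⟩, hx₁, hv₁⟩ := mem_kCylAt_iff.1 h₁
  obtain ⟨⟨ht₂, ht₂'⟩, hx₂, hv₂⟩ := mem_kCylAt_iff.1 h₂
  have hr : 0 < r := (norm_nonneg _).trans_lt hv₁
  refine (kdistCand_lt_iff hr).2 ⟨abs_sub_lt_iff.2 ⟨by linarith, by linarith⟩, hv₁, hv₂, ?_⟩
  calc ‖(z₁.2.1 - z₂.2.1) - (z₁.1 - z₂.1) • z.2.2‖
      = ‖(z₁.2.1 - z.2.1 - (z₁.1 - z.1) • z.2.2) - (z₂.2.1 - z.2.1 - (z₂.1 - z.1) • z.2.2)‖ := by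
        congr 1; module
    _ ≤ ‖z₁.2.1 - z.2.1 - (z₁.1 - z.1) • z.2.2‖ + ‖z₂.2.1 - z.2.1 - (z₂.1 - z.1) • z.2.2‖ :=
        norm_sub_le _ _
    _ < 2 * r ^ 3 := by linarith

lemma exists_mem_kCylAt_of_kdistCand_lt {z₁ z₂ : KPt d} {w : EuclideanSpace ℝ (Fin d)} {r : ℝ}
    (h : kdistCand z₁ z₂ w < r) : ∃ z : KPt d, z₁ ∈ kCylAt z r ∧ z₂ ∈ kCylAt z r := by
  obtain ⟨ht, hv₁, hv₂, hD⟩ := (kdistCand_lt_iff ((kdistCand_nonneg z₁ z₂ w).trans_lt h)).1 h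
  set s := max z₁.1 z₂.1
  set D := (z₁.2.1 - z₂.2.1) - (z₁.1 - z₂.1) • w
  -- the position of the centre puts the two points at `±D/2` in the frame of velocity `w`
  set y := (2⁻¹ : ℝ) • (z₁.2.1 + z₂.2.1 - (z₁.1 - s) • w - (z₂.1 - s) • w)
  have hs : s - min z₁.1 z₂.1 < r ^ 2 := by rwa [max_sub_min_eq_abs']
  have hx₁ : z₁.2.1 - y - (z₁.1 - s) • w = (2⁻¹ : ℝ) • D := by module
  have hx₂ : z₂.2.1 - y - (z₂.1 - s) • w = -((2⁻¹ : ℝ) • D) := by module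
  have hD' : ‖(2⁻¹ : ℝ) • D‖ < r ^ 3 := by
    rw [norm_smul, Real.norm_of_nonneg (by norm_num)]
    linarith
  refine ⟨(s, y, w), mem_kCylAt_iff.2 ⟨⟨?_, ?_⟩, ?_, hv₁⟩, mem_kCylAt_iff.2 ⟨⟨?_, ?_⟩, ?_, hv₂⟩⟩
  · linarith [min_le_left z₁.1 z₂.1]
  · exact sub_nonpos.2 (le_max_left _ _)
  · rwa [hx₁]
  · linarith [min_le_right z₁.1 z₂.1]
  · exact sub_nonpos.2 (le_max_right _ _)
  · rwa [hx₂, norm_neg]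

end Kinetic

/-- Explicit formula for the kinetic distance: it equals the minimum over `w ∈ ℝᵈ` of
`kdistCand z₁ z₂ w`, and this minimum is attained. -/
theorem stmt14 {d : ℕ} (z₁ z₂ : KPt d) :
    ∃ w : EuclideanSpace ℝ (Fin d),
      (∀ w' : EuclideanSpace ℝ (Fin d), kdistCand z₁ z₂ w ≤ kdistCand z₁ z₂ w') ∧
      kdist z₁ z₂ = kdistCand z₁ z₂ w := by
  obtain ⟨w, hw⟩ := exists_forall_kdistCand_le z₁ z₂
  refine ⟨w, hw, ?_⟩
  suffices {r : ℝ | 0 < r ∧ ∃ z : KPt d, z₁ ∈ kCylAt z r ∧ z₂ ∈ kCylAt z r} =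
      Set.Ioi (kdistCand z₁ z₂ w) by
    rw [kdist, this, csInf_Ioi]
  ext r
  constructor
  · rintro ⟨-, z, h₁, h₂⟩
    exact (hw _).trans_lt (kdistCand_lt_of_mem_kCylAt h₁ h₂)
  · intro h
    exact ⟨(kdistCand_nonneg z₁ z₂ w).trans_lt h, exists_mem_kCylAt_of_kdistCand_lt h⟩
end
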